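/- In a finite acyclic MDP, let R^B be a bonus function and let π* be a policy that is everywhere-optimal for R^A + R^B, and let δ > 0. Define R̃^B by R̃^B(s,a) = R^B(s,a) + 2^{h(s)}·δ if s is non-terminal and a = π*(s), and R̃^B(s,a) = R^B(s,a) otherwise, where h(s) is the height of s. Then π* is everywhere-optimal for R^A + R̃^B; moreover, for every policy π and every non-terminal state s with π(s) ≠ π*(s), V_s(π, R^A + R̃^B) < V_s(π*, R^A + R̃^B), so π* is the unique everywhere-optimal policy for R^A + R̃^B; and the added total cost is ∑_{(s,a)} (R̃^B − R^B)(s,a) = δ·∑_{non-terminal s} 2^{h(s)}, which is at most any prescribed ε > 0 for δ small enough. -/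

import Mathlib

/-!
Split the perturbed reward as `R + b`, where `R = R^A + R^B` and `b` is the height bonus. Policy
evaluation is additive in the reward and `π*` is already optimal for `R`, so it suffices to compare
the bonus values `V π b`. Along `π*` the bonus collected at a non-terminal state `s` is already
`2^{h(s)}·δ`, while a policy that deviates at `s` collects nothing there and, since heights strictly
drop along transitions, at most `(2^{h(s)} - 1)·δ` afterwards.
-/

open Finset

section ExpectedValue

variable {ι : Type} [Fintype ι] {p f g : ι → ℝ}

theorem sum_mul_le_sum_mul_of_pos (hp : ∀ i, 0 ≤ p i) (hfg : ∀ i, 0 < p i → f i ≤ g i) :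
    ∑ i, p i * f i ≤ ∑ i, p i * g i :=
  sum_le_sum fun i _ => (hp i).eq_or_lt.elim (fun h0 => by simp [← h0])
    fun hpos => mul_le_mul_of_nonneg_left (hfg i hpos) hpos.le

theorem sum_mul_congr_of_pos (hp : ∀ i, 0 ≤ p i) (hfg : ∀ i, 0 < p i → f i = g i) :
    ∑ i, p i * f i = ∑ i, p i * g i :=
  le_antisymm (sum_mul_le_sum_mul_of_pos hp fun i hi => (hfg i hi).le)
    (sum_mul_le_sum_mul_of_pos hp fun i hi => (hfg i hi).ge)

theorem sum_mul_nonneg_of_pos (hp : ∀ i, 0 ≤ p i) (hf : ∀ i, 0 < p i → 0 ≤ f i) :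
    0 ≤ ∑ i, p i * f i := by
  simpa using sum_mul_le_sum_mul_of_pos hp (f := 0) hf

theorem sum_mul_le_of_pos {c : ℝ} (hp : ∀ i, 0 ≤ p i) (hp1 : ∑ i, p i = 1)
    (hf : ∀ i, 0 < p i → f i ≤ c) : ∑ i, p i * f i ≤ c :=
  calc ∑ i, p i * f i ≤ ∑ i, p i * c := sum_mul_le_sum_mul_of_pos hp hf
    _ = c := by rw [← sum_mul, hp1, one_mul]

end ExpectedValue

section MDP

variable {S A : Type}

def IsPolicy (act : S → Finset A) (π : S → A) : Prop :=
  ∀ s, act s ≠ ∅ → π s ∈ act s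

def IsRanking (act : S → Finset A) (P : S → A → S → ℝ) (h : S → ℕ) : Prop :=
  ∀ s, ∀ a ∈ act s, ∀ t, 0 < P s a t → h t < h s

structure IsPolicyValue [Fintype S] (act : S → Finset A) (P : S → A → S → ℝ)
    (V : (S → A) → (S → A → ℝ) → S → ℝ) : Prop where
  terminal : ∀ π R s, act s = ∅ → V π R s = 0
  bellman : ∀ π R s, act s ≠ ∅ → V π R s = R s (π s) + ∑ t, P s (π s) t * V π R t

variable {act : S → Finset A} {P : S → A → S → ℝ} {h : S → ℕ} {π : S → A}

@[elab_as_elim]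
theorem IsRanking.induction (hh : IsRanking act P h) (hπ : IsPolicy act π) {q : S → Prop}
    (terminal : ∀ s, act s = ∅ → q s)
    (step : ∀ s, act s ≠ ∅ → (∀ t, 0 < P s (π s) t → q t) → q s) (s : S) : q s := by
  induction s using (measure h).wf.induction with
  | _ s ih =>
    by_cases hs : act s = ∅
    · exact terminal s hs
    · exact step s hs fun t ht => ih t (hh s _ (hπ s hs) t ht)

theorem IsRanking.sum_mul_le_geometric [Fintype S] (hh : IsRanking act P h)
    (hP0 : ∀ s a t, 0 ≤ P s a t) (hP1 : ∀ s, ∀ a ∈ act s, ∑ t, P s a t = 1)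
    {s : S} {a : A} (ha : a ∈ act s) {δ : ℝ} (hδ : 0 ≤ δ) {f : S → ℝ}
    (hf : ∀ t, 0 < P s a t → f t ≤ (2 ^ (h t + 1) - 1) * δ) :
    ∑ t, P s a t * f t ≤ (2 ^ h s - 1) * δ :=
  sum_mul_le_of_pos (hP0 s a) (hP1 s a ha) fun t ht =>
    (hf t ht).trans (by gcongr; exacts [one_le_two, hh s a ha t ht])

namespace IsPolicyValue

variable [Fintype S] {V : (S → A) → (S → A → ℝ) → S → ℝ}

theorem value_add (hV : IsPolicyValue act P V) (hP0 : ∀ s a t, 0 ≤ P s a t)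
    (hh : IsRanking act P h) (hπ : IsPolicy act π) (R c : S → A → ℝ) (s : S) :
    V π (R + c) s = V π R s + V π c s := by
  refine hh.induction hπ (fun s hs => ?_) (fun s hs ih => ?_) s
  · simp [hV.terminal _ _ s hs]
  · rw [hV.bellman π _ s hs, hV.bellman π R s hs, hV.bellman π c s hs, Pi.add_apply,
      Pi.add_apply, sum_mul_congr_of_pos (hP0 s (π s)) ih]
    simp only [mul_add, sum_add_distrib]
    ring

theorem value_nonneg (hV : IsPolicyValue act P V) (hP0 : ∀ s a t, 0 ≤ P s a t)
    (hh : IsRanking act P h) (hπ : IsPolicy act π) {R : S → A → ℝ} (hR : ∀ s a, 0 ≤ R s a)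
    (s : S) : 0 ≤ V π R s := by
  refine hh.induction hπ (fun s hs => (hV.terminal π R s hs).ge) (fun s hs ih => ?_) s
  rw [hV.bellman π R s hs]
  exact add_nonneg (hR _ _) (sum_mul_nonneg_of_pos (hP0 s (π s)) ih)

/-- A reward of at most `2^{h(s)}·δ` at each state yields a value of at most
`(1 + 2 + ⋯ + 2^{h(s)})·δ`. -/
theorem value_le_geometric (hV : IsPolicyValue act P V) (hP0 : ∀ s a t, 0 ≤ P s a t)
    (hP1 : ∀ s, ∀ a ∈ act s, ∑ t, P s a t = 1) (hh : IsRanking act P h)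
    (hπ : IsPolicy act π) {δ : ℝ} (hδ : 0 ≤ δ) {R : S → A → ℝ}
    (hR : ∀ s a, R s a ≤ 2 ^ h s * δ) (s : S) : V π R s ≤ (2 ^ (h s + 1) - 1) * δ := by
  refine hh.induction hπ (fun s hs => ?_) (fun s hs ih => ?_) s
  · rw [hV.terminal π R s hs, pow_succ]
    nlinarith [one_le_pow₀ (M₀ := ℝ) one_le_two (n := h s)]
  · rw [hV.bellman π R s hs]
    calc R s (π s) + ∑ t, P s (π s) t * V π R t ≤ 2 ^ h s * δ + (2 ^ h s - 1) * δ :=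
          add_le_add (hR s (π s)) (hh.sum_mul_le_geometric hP0 hP1 (hπ s hs) hδ ih)
      _ = (2 ^ (h s + 1) - 1) * δ := by ring

end IsPolicyValue

section HeightBonus

variable [DecidableEq A]

def heightBonus (act : S → Finset A) (h : S → ℕ) (δ : ℝ) (πstar : S → A) (s : S) (b : A) : ℝ :=
  if act s ≠ ∅ ∧ b = πstar s then (2 : ℝ) ^ h s * δ else 0

variable {δ : ℝ} {πstar : S → A}

theorem heightBonus_nonneg (hδ : 0 ≤ δ) (s : S) (b : A) : 0 ≤ heightBonus act h δ πstar s b := by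
  unfold heightBonus; split_ifs <;> positivity

theorem heightBonus_le (hδ : 0 ≤ δ) (s : S) (b : A) :
    heightBonus act h δ πstar s b ≤ 2 ^ h s * δ := by
  unfold heightBonus; split_ifs <;> first | exact le_rfl | positivity

theorem sum_heightBonus [Fintype S] [Fintype A] :
    ∑ s, ∑ b, heightBonus act h δ πstar s b =
      δ * ∑ s ∈ univ.filter (fun s => act s ≠ ∅), (2 : ℝ) ^ h s := by
  simp only [heightBonus, ite_and, mul_sum, sum_filter]
  exact sum_congr rfl fun s _ => by split_ifs <;> simp [mul_comm]

namespace IsPolicyValue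

variable [Fintype S] {V : (S → A) → (S → A → ℝ) → S → ℝ}

theorem pow_le_value_heightBonus (hV : IsPolicyValue act P V) (hP0 : ∀ s a t, 0 ≤ P s a t)
    (hh : IsRanking act P h) (hπstar : IsPolicy act πstar) (hδ : 0 ≤ δ) {s : S}
    (hs : act s ≠ ∅) : 2 ^ h s * δ ≤ V πstar (heightBonus act h δ πstar) s := by
  rw [hV.bellman _ _ s hs]
  have hfuture : 0 ≤ ∑ t, P s (πstar s) t * V πstar (heightBonus act h δ πstar) t :=
    sum_mul_nonneg_of_pos (hP0 s (πstar s))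
      fun t _ => hV.value_nonneg hP0 hh hπstar (heightBonus_nonneg hδ) t
  simp only [heightBonus, hs, ne_eq, not_false_eq_true, and_self, if_true] at hfuture ⊢
  linarith

theorem value_heightBonus_le_of_ne (hV : IsPolicyValue act P V) (hP0 : ∀ s a t, 0 ≤ P s a t)
    (hP1 : ∀ s, ∀ a ∈ act s, ∑ t, P s a t = 1) (hh : IsRanking act P h)
    (hπ : IsPolicy act π) (hδ : 0 ≤ δ) {s : S} (hs : act s ≠ ∅) (hne : π s ≠ πstar s) :
    V π (heightBonus act h δ πstar) s ≤ (2 ^ h s - 1) * δ := by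
  rw [hV.bellman _ _ s hs]
  have hfuture : ∑ t, P s (π s) t * V π (heightBonus act h δ πstar) t ≤ (2 ^ h s - 1) * δ :=
    hh.sum_mul_le_geometric hP0 hP1 (hπ s hs) hδ
      fun t _ => hV.value_le_geometric hP0 hP1 hh hπ hδ (heightBonus_le hδ) t
  simpa [heightBonus, hne] using hfuture

theorem value_heightBonus_lt_of_ne (hV : IsPolicyValue act P V) (hP0 : ∀ s a t, 0 ≤ P s a t)
    (hP1 : ∀ s, ∀ a ∈ act s, ∑ t, P s a t = 1) (hh : IsRanking act P h)
    (hπ : IsPolicy act π) (hπstar : IsPolicy act πstar) (hδ : 0 < δ) {s : S}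
    (hs : act s ≠ ∅) (hne : π s ≠ πstar s) :
    V π (heightBonus act h δ πstar) s < V πstar (heightBonus act h δ πstar) s := by
  have hdev := hV.value_heightBonus_le_of_ne hP0 hP1 hh hπ hδ.le hs hne
  have hstar := hV.pow_le_value_heightBonus hP0 hh hπstar hδ.le hs
  linarith

theorem value_heightBonus_le (hV : IsPolicyValue act P V) (hP0 : ∀ s a t, 0 ≤ P s a t)
    (hP1 : ∀ s, ∀ a ∈ act s, ∑ t, P s a t = 1) (hh : IsRanking act P h)
    (hπ : IsPolicy act π) (hπstar : IsPolicy act πstar) (hδ : 0 < δ) (s : S) :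
    V π (heightBonus act h δ πstar) s ≤ V πstar (heightBonus act h δ πstar) s := by
  refine hh.induction hπ (fun s hs => ?_) (fun s hs ih => ?_) s
  · rw [hV.terminal _ _ s hs, hV.terminal _ _ s hs]
  by_cases hne : π s = πstar s
  · rw [hV.bellman _ _ s hs, hV.bellman _ _ s hs, ← hne]
    exact add_le_add le_rfl (sum_mul_le_sum_mul_of_pos (hP0 s (π s)) ih)
  · exact (hV.value_heightBonus_lt_of_ne hP0 hP1 hh hπ hπstar hδ hs hne).le

end IsPolicyValue

end HeightBonus

end MDP

theorem stmt_8_general {S A : Type} [Fintype S] [Fintype A] [DecidableEq A]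
    (act : S → Finset A)
    (P : S → A → S → ℝ)
    (hP0 : ∀ s a t, 0 ≤ P s a t)
    (hP1 : ∀ s, ∀ a ∈ act s, ∑ t, P s a t = 1)
    (V : (S → A) → (S → A → ℝ) → S → ℝ)
    (hVterm : ∀ (π : S → A) (R : S → A → ℝ) (s : S), act s = ∅ → V π R s = 0)
    (hVrec : ∀ (π : S → A) (R : S → A → ℝ) (s : S), act s ≠ ∅ →
      V π R s = R s (π s) + ∑ t, P s (π s) t * V π R t)
    (RA : S → A → ℝ)
    (RB : S → A → ℝ)
    (πstar : S → A) (hπstar : ∀ s, act s ≠ ∅ → πstar s ∈ act s)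
    (hopt : ∀ π : S → A, (∀ s, act s ≠ ∅ → π s ∈ act s) → ∀ s,
      V π (fun s b => RA s b + RB s b) s ≤ V πstar (fun s b => RA s b + RB s b) s)
    (δ : ℝ) (hδ : 0 < δ)
    (h : S → ℕ)
    (hhlt : ∀ s, ∀ a ∈ act s, ∀ t, 0 < P s a t → h t < h s)
    (RtB : S → A → ℝ)
    (hRtB : ∀ s b, RtB s b = RB s b +
      (if act s ≠ ∅ ∧ b = πstar s then (2 : ℝ) ^ (h s) * δ else 0)) :
    (∀ π : S → A, (∀ s, act s ≠ ∅ → π s ∈ act s) → ∀ s,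
      V π (fun s b => RA s b + RtB s b) s ≤ V πstar (fun s b => RA s b + RtB s b) s) ∧
    (∀ π : S → A, (∀ s, act s ≠ ∅ → π s ∈ act s) → ∀ s, act s ≠ ∅ → π s ≠ πstar s →
      V π (fun s b => RA s b + RtB s b) s < V πstar (fun s b => RA s b + RtB s b) s) ∧
    (∀ π : S → A, (∀ s, act s ≠ ∅ → π s ∈ act s) →
      (∀ σ : S → A, (∀ s, act s ≠ ∅ → σ s ∈ act s) → ∀ s,
        V σ (fun s b => RA s b + RtB s b) s ≤ V π (fun s b => RA s b + RtB s b) s) →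
      ∀ s, act s ≠ ∅ → π s = πstar s) ∧
    ((∑ s, ∑ b, (RtB s b - RB s b)) =
      δ * ∑ s ∈ Finset.univ.filter (fun s => act s ≠ ∅), (2 : ℝ) ^ (h s)) ∧
    (∀ ε : ℝ, 0 < ε → ∃ δ' : ℝ, 0 < δ' ∧
      δ' * ∑ s ∈ Finset.univ.filter (fun s => act s ≠ ∅), (2 : ℝ) ^ (h s) ≤ ε) := by
  have hV : IsPolicyValue act P V := ⟨hVterm, hVrec⟩
  have hRtB' : (fun s b => RA s b + RtB s b) =
      (fun s b => RA s b + RB s b) + heightBonus act h δ πstar := by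
    funext s b
    simp only [hRtB, heightBonus, Pi.add_apply]
    ring
  have hsplit : ∀ π, IsPolicy act π → ∀ s, V π (fun s b => RA s b + RtB s b) s =
      V π (fun s b => RA s b + RB s b) s + V π (heightBonus act h δ πstar) s := by
    intro π hπ s
    rw [hRtB', hV.value_add hP0 hhlt hπ]
  have hstrict : ∀ π, IsPolicy act π → ∀ s, act s ≠ ∅ → π s ≠ πstar s →
      V π (fun s b => RA s b + RtB s b) s < V πstar (fun s b => RA s b + RtB s b) s := by
    intro π hπ s hs hne
    rw [hsplit π hπ, hsplit πstar hπstar]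
    linarith [hopt π hπ s, hV.value_heightBonus_lt_of_ne hP0 hP1 hhlt hπ hπstar hδ hs hne]
  refine ⟨fun π hπ s => ?_, hstrict, fun π hπ hoptπ s hs => ?_, ?_, fun ε hε => ?_⟩
  · rw [hsplit π hπ, hsplit πstar hπstar]
    linarith [hopt π hπ s, hV.value_heightBonus_le hP0 hP1 hhlt hπ hπstar hδ s]
  · by_contra hne
    exact (hstrict π hπ s hs hne).not_ge (hoptπ πstar hπstar s)
  · simp only [hRtB, add_sub_cancel_left]
    exact sum_heightBonus
  · set T := ∑ s ∈ univ.filter (fun s => act s ≠ ∅), (2 : ℝ) ^ h s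
    have hT : 0 ≤ T := sum_nonneg fun s _ => by positivity
    refine ⟨ε / (T + 1), by positivity, ?_⟩
    rw [div_mul_eq_mul_div, div_le_iff₀ (by linarith)]
    nlinarith

/-- in a finite acyclic MDP, perturbing a bonus by `2^{h(s)}·δ` along an
everywhere-optimal policy `π*` keeps `π*` everywhere-optimal, makes it strictly better
than any deviating policy (hence the unique everywhere-optimal policy), and the added
total cost is `δ·∑ 2^{h(s)}`, which can be made at most any `ε > 0`. -/
theorem stmt_8 {S A : Type} [Fintype S] [Fintype A] [DecidableEq S] [DecidableEq A]
    (act : S → Finset A)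
    (P : S → A → S → ℝ)
    (hP0 : ∀ s a t, 0 ≤ P s a t)
    (hP1 : ∀ s, ∀ a ∈ act s, ∑ t, P s a t = 1)
    (rank : S → ℕ)
    (hacyc : ∀ s, ∀ a ∈ act s, ∀ t, 0 < P s a t → rank t < rank s)
    (V : (S → A) → (S → A → ℝ) → S → ℝ)
    (hVterm : ∀ (π : S → A) (R : S → A → ℝ) (s : S), act s = ∅ → V π R s = 0)
    (hVrec : ∀ (π : S → A) (R : S → A → ℝ) (s : S), act s ≠ ∅ →
      V π R s = R s (π s) + ∑ t, P s (π s) t * V π R t)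
    (RA : S → A → ℝ)
    (RB : S → A → ℝ) (hRB0 : ∀ s a, 0 ≤ RB s a)
    (πstar : S → A) (hπstar : ∀ s, act s ≠ ∅ → πstar s ∈ act s)
    (hopt : ∀ π : S → A, (∀ s, act s ≠ ∅ → π s ∈ act s) → ∀ s,
      V π (fun s b => RA s b + RB s b) s ≤ V πstar (fun s b => RA s b + RB s b) s)
    (δ : ℝ) (hδ : 0 < δ)
    (h : S → ℕ)
    (hh0 : ∀ s, act s = ∅ → h s = 0)
    (hhlt : ∀ s, ∀ a ∈ act s, ∀ t, 0 < P s a t → h t < h s)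
    (hhmax : ∀ s, act s ≠ ∅ → ∃ a ∈ act s, ∃ t, 0 < P s a t ∧ h s = h t + 1)
    (RtB : S → A → ℝ)
    (hRtB : ∀ s b, RtB s b = RB s b +
      (if act s ≠ ∅ ∧ b = πstar s then (2 : ℝ) ^ (h s) * δ else 0)) :
    (∀ π : S → A, (∀ s, act s ≠ ∅ → π s ∈ act s) → ∀ s,
      V π (fun s b => RA s b + RtB s b) s ≤ V πstar (fun s b => RA s b + RtB s b) s) ∧
    (∀ π : S → A, (∀ s, act s ≠ ∅ → π s ∈ act s) → ∀ s, act s ≠ ∅ → π s ≠ πstar s →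
      V π (fun s b => RA s b + RtB s b) s < V πstar (fun s b => RA s b + RtB s b) s) ∧
    (∀ π : S → A, (∀ s, act s ≠ ∅ → π s ∈ act s) →
      (∀ σ : S → A, (∀ s, act s ≠ ∅ → σ s ∈ act s) → ∀ s,
        V σ (fun s b => RA s b + RtB s b) s ≤ V π (fun s b => RA s b + RtB s b) s) →
      ∀ s, act s ≠ ∅ → π s = πstar s) ∧
    ((∑ s, ∑ b, (RtB s b - RB s b)) =
      δ * ∑ s ∈ Finset.univ.filter (fun s => act s ≠ ∅), (2 : ℝ) ^ (h s)) ∧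
    (∀ ε : ℝ, 0 < ε → ∃ δ' : ℝ, 0 < δ' ∧
      δ' * ∑ s ∈ Finset.univ.filter (fun s => act s ≠ ∅), (2 : ℝ) ^ (h s) ≤ ε) :=
  stmt_8_general act P hP0 hP1 V hVterm hVrec RA RB πstar hπstar hopt δ hδ h hhlt RtB hRtB
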